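/- arXiv:1506.07216 — 4 statements merged into one kernel-verified Lean document; each statement's English description precedes it below -/
import Mathlib

section
/- Let 𝒯 be a measurable space with a σ-finite measure λ, let m ≥ 1, and for each i ∈ {1,…,m} let q_i : {0,1} × 𝒯 → [0,∞) be measurable. For each b ∈ {0,1}^m let P_b be the measure on 𝒯 with density π ↦ ∏_{i=1}^m q_i(b_i, π) with respect to λ, and assume each P_b is a probability measure. Then for all a, b, c, d ∈ {0,1}^m satisfying {a_i, b_i} = {c_i, d_i} as multisets for every i ∈ {1,…,m}: (dP_a/dλ)(π)·(dP_b/dλ)(π) = (dP_c/dλ)(π)·(dP_d/dλ)(π) for λ-almost every π, and consequently h²(P_a, P_b) = h²(P_c, P_d). -/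
open MeasureTheory
open scoped ENNReal NNReal Classical

/-- Squared Hellinger distance between two measures, computed with respect to the
dominating measure `P + Q`. -/
noncomputable def sqHellinger {α : Type*} [MeasurableSpace α] (P Q : Measure α) : ℝ :=
  (1 / 2) * ∫ x, (Real.sqrt ((P.rnDeriv (P + Q) x).toReal)
      - Real.sqrt ((Q.rnDeriv (P + Q) x).toReal)) ^ 2 ∂(P + Q)

/-! For factorizing densities `p_e = ∏ i, q_i (e i)`, the product
`p_a p_b = ∏ i, q_i (a i) q_i (b i)` depends only on the multisets `{a i, b i}`. On the other
hand, for probability densities `f, g` with respect to `λ`, the Radon–Nikodym derivatives with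
respect to `P + Q` are `f / (f + g)` and `g / (f + g)`, which turns the squared Hellinger
distance into `1 - ∫ √(f g) dλ`, a function of `f g` alone. -/

lemma mul_eq_mul_of_pair_eq {α M : Type*} [CommMonoid M] (f : α → M) {a b c d : α}
    (h : ({a, b} : Multiset α) = {c, d}) : f a * f b = f c * f d := by
  simpa using congrArg (fun s => (s.map f).prod) h

lemma prod_mul_prod_eq_of_pair_eq {ι α M : Type*} [Fintype ι] [CommMonoid M]
    (f : ι → α → M) {a b c d : ι → α}
    (h : ∀ i, ({a i, b i} : Multiset α) = {c i, d i}) :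
    (∏ i, f i (a i)) * ∏ i, f i (b i) = (∏ i, f i (c i)) * ∏ i, f i (d i) := by
  simp only [← Finset.prod_mul_distrib, mul_eq_mul_of_pair_eq _ (h _)]

lemma mul_sq_sqrt_div_sub_sqrt_div {x y : ℝ} (hx : 0 ≤ x) (hy : 0 ≤ y) :
    (x + y) * (√(x / (x + y)) - √(y / (x + y))) ^ 2 = (√x - √y) ^ 2 := by
  rcases (add_nonneg hx hy).eq_or_lt with hzero | hpos
  · obtain ⟨rfl, rfl⟩ : x = 0 ∧ y = 0 := by constructor <;> linarith
    simp
  · rw [Real.sqrt_div hx, Real.sqrt_div hy, ← sub_div, div_pow, Real.sq_sqrt hpos.le,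
      mul_div_cancel₀ _ hpos.ne']

lemma integral_sq_sqrt_sub_sqrt {α : Type*} [MeasurableSpace α] {μ : Measure α}
    {u v : α → ℝ} (hu0 : 0 ≤ u) (hv0 : 0 ≤ v) (hu : Integrable u μ) (hv : Integrable v μ) :
    ∫ x, (√(u x) - √(v x)) ^ 2 ∂μ = ∫ x, u x ∂μ + ∫ x, v x ∂μ - 2 * ∫ x, √(u x * v x) ∂μ := by
  have hexpand : ∀ x, (√(u x) - √(v x)) ^ 2 = u x + v x - 2 * √(u x * v x) := fun x => by
    rw [sub_sq, Real.sq_sqrt (hu0 x), Real.sq_sqrt (hv0 x), Real.sqrt_mul (hu0 x)]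
    ring
  -- AM-GM: `√(uv) ≤ (u + v) / 2`
  have hsqrt : Integrable (fun x => √(u x * v x)) μ := by
    refine ((hu.add hv).div_const 2).mono'
      (Real.continuous_sqrt.comp_aestronglyMeasurable (hu.1.mul hv.1)) (ae_of_all _ fun x => ?_)
    rw [Real.norm_of_nonneg (Real.sqrt_nonneg _), Pi.add_apply]
    nlinarith [hexpand x, sq_nonneg (√(u x) - √(v x))]
  have huv : Integrable (fun x => u x + v x) μ := hu.add hv
  simp_rw [hexpand]
  rw [integral_sub huv (hsqrt.const_mul 2), integral_add hu hv, integral_const_mul]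

section withDensity

variable {T : Type*} [MeasurableSpace T] {lam : Measure T} {f g : T → ℝ≥0∞}

lemma rnDeriv_withDensity_withDensity_of_le [SigmaFinite lam]
    (hf : Measurable f) (hg : Measurable g)
    (hfg : ∀ᵐ x ∂lam, f x ≤ g x) (hg_fin : ∀ᵐ x ∂lam, g x ≠ ∞) :
    (lam.withDensity f).rnDeriv (lam.withDensity g) =ᵐ[lam.withDensity g] f / g := by
  have := SigmaFinite.withDensity_of_ne_top hg_fin
  have hdiv : (lam.withDensity g).withDensity (f / g) = lam.withDensity f := by
    rw [← withDensity_mul lam hg (hf.div hg)]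
    refine withDensity_congr_ae ?_
    -- `f ≤ g` forces `f = 0` where `g = 0`, so `g * (f / g) = f` wherever `g ≠ ∞`
    filter_upwards [hfg, hg_fin] with x hle hx
    rcases eq_or_ne (g x) 0 with h0 | h0
    · simp [h0, nonpos_iff_eq_zero.mp (h0 ▸ hle)]
    · exact ENNReal.mul_div_cancel h0 hx
  simpa only [hdiv] using Measure.rnDeriv_withDensity (lam.withDensity g) (hf.div hg)

lemma sqHellinger_withDensity_eq_integral [SigmaFinite lam]
    (hf : Measurable f) (hg : Measurable g)
    (hf_fin : ∀ᵐ x ∂lam, f x ≠ ∞) (hg_fin : ∀ᵐ x ∂lam, g x ≠ ∞) :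
    sqHellinger (lam.withDensity f) (lam.withDensity g)
      = 1 / 2 * ∫ x, (√(f x).toReal - √(g x).toReal) ^ 2 ∂lam := by
  have hfg_fin : ∀ᵐ x ∂lam, f x + g x ≠ ∞ := by
    filter_upwards [hf_fin, hg_fin] with x hfx hgx using ENNReal.add_ne_top.mpr ⟨hfx, hgx⟩
  have hsum : lam.withDensity f + lam.withDensity g = lam.withDensity (f + g) :=
    (withDensity_add_left hf g).symm
  have hf_rn := rnDeriv_withDensity_withDensity_of_le hf (hf.add hg)
    (ae_of_all _ fun x => le_self_add) hfg_fin
  have hg_rn := rnDeriv_withDensity_withDensity_of_le hg (hf.add hg)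
    (ae_of_all _ fun x => le_add_self) hfg_fin
  rw [sqHellinger, hsum]
  congr 1
  calc _ = ∫ x, (√(f x / (f x + g x)).toReal - √(g x / (f x + g x)).toReal) ^ 2
          ∂lam.withDensity (f + g) := by
        refine integral_congr_ae ?_
        filter_upwards [hf_rn, hg_rn] with x hfx hgx
        simp only [hfx, hgx, Pi.div_apply, Pi.add_apply]
    _ = ∫ x, (f x + g x).toReal
          • (√(f x / (f x + g x)).toReal - √(g x / (f x + g x)).toReal) ^ 2 ∂lam :=
        integral_withDensity_eq_integral_toReal_smul (hf.add hg)
          (hfg_fin.mono fun x hx => hx.lt_top) _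
    _ = ∫ x, (√(f x).toReal - √(g x).toReal) ^ 2 ∂lam := by
        refine integral_congr_ae ?_
        filter_upwards [hf_fin, hg_fin] with x hfx hgx
        rw [smul_eq_mul, ENNReal.toReal_div, ENNReal.toReal_div, ENNReal.toReal_add hfx hgx]
        exact mul_sq_sqrt_div_sub_sqrt_div ENNReal.toReal_nonneg ENNReal.toReal_nonneg

lemma lintegral_eq_one_of_isProbabilityMeasure_withDensity
    [IsProbabilityMeasure (lam.withDensity f)] : ∫⁻ x, f x ∂lam = 1 := by
  simpa [withDensity_apply f MeasurableSet.univ] using measure_univ (μ := lam.withDensity f)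

lemma sqHellinger_withDensity_eq_one_sub_integral_sqrt_mul [SigmaFinite lam]
    (hf : Measurable f) (hg : Measurable g)
    [IsProbabilityMeasure (lam.withDensity f)] [IsProbabilityMeasure (lam.withDensity g)] :
    sqHellinger (lam.withDensity f) (lam.withDensity g)
      = 1 - ∫ x, √(f x * g x).toReal ∂lam := by
  have density_facts {u : T → ℝ≥0∞} (hu : Measurable u) (hu1 : ∫⁻ x, u x ∂lam = 1) :
      (∀ᵐ x ∂lam, u x ≠ ∞) ∧ Integrable (fun x => (u x).toReal) lam
        ∧ ∫ x, (u x).toReal ∂lam = 1 := by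
    have hu_fin := ae_lt_top hu (hu1 ▸ ENNReal.one_ne_top)
    refine ⟨hu_fin.mono fun x hx => hx.ne,
      integrable_toReal_of_lintegral_ne_top hu.aemeasurable (hu1 ▸ ENNReal.one_ne_top), ?_⟩
    rw [integral_toReal hu.aemeasurable hu_fin, hu1, ENNReal.toReal_one]
  obtain ⟨hf_fin, hf_int, hf_one⟩ :=
    density_facts hf (lintegral_eq_one_of_isProbabilityMeasure_withDensity (f := f))
  obtain ⟨hg_fin, hg_int, hg_one⟩ :=
    density_facts hg (lintegral_eq_one_of_isProbabilityMeasure_withDensity (f := g))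
  rw [sqHellinger_withDensity_eq_integral hf hg hf_fin hg_fin,
    integral_sq_sqrt_sub_sqrt (fun _ => ENNReal.toReal_nonneg) (fun _ => ENNReal.toReal_nonneg)
      hf_int hg_int, hf_one, hg_one]
  simp only [ENNReal.toReal_mul]
  ring

end withDensity

theorem cut_paste_of_factorizing_general
    {T : Type*} [MeasurableSpace T] (lam : Measure T) [SigmaFinite lam]
    (m : ℕ) (q : Fin m → Bool → T → ℝ≥0)
    (hq : ∀ i b, Measurable (q i b))
    (P : (Fin m → Bool) → Measure T)
    (hP : ∀ b, P b = lam.withDensity (fun π => ∏ i, (q i (b i) π : ℝ≥0∞)))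
    (hprob : ∀ b, IsProbabilityMeasure (P b))
    (a b c d : Fin m → Bool)
    (h : ∀ i, ({a i, b i} : Multiset Bool) = ({c i, d i} : Multiset Bool)) :
    (∀ᵐ π ∂lam,
        (∏ i, (q i (a i) π : ℝ≥0∞)) * ∏ i, (q i (b i) π : ℝ≥0∞)
          = (∏ i, (q i (c i) π : ℝ≥0∞)) * ∏ i, (q i (d i) π : ℝ≥0∞)) ∧
      sqHellinger (P a) (P b) = sqHellinger (P c) (P d) := by
  have hdens (e : Fin m → Bool) : Measurable fun π => ∏ i, (q i (e i) π : ℝ≥0∞) := by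
    fun_prop
  have hprod (π : T) := prod_mul_prod_eq_of_pair_eq (fun i β => (q i β π : ℝ≥0∞)) h
  have hHellinger (e e' : Fin m → Bool) : sqHellinger (P e) (P e') = 1 - ∫ π,
      √((∏ i, (q i (e i) π : ℝ≥0∞)) * ∏ i, (q i (e' i) π : ℝ≥0∞)).toReal ∂lam := by
    have he := hprob e
    have he' := hprob e'
    rw [hP] at he he' ⊢
    rw [hP]
    exact sqHellinger_withDensity_eq_one_sub_integral_sqrt_mul (hdens e) (hdens e')
  refine ⟨ae_of_all _ hprod, ?_⟩
  simp only [hHellinger, hprod]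

/-- **Cut-paste property of protocols.** If the measures `P_b` have densities with respect
to a σ-finite measure `λ` that factorize as `π ↦ ∏_i q_i(b_i, π)`, then for all
`a, b, c, d ∈ {0,1}^m` with `{a_i, b_i} = {c_i, d_i}` as multisets for each `i`, the
products of the densities of `P_a, P_b` and of `P_c, P_d` agree `λ`-a.e., and consequently
`h²(P_a, P_b) = h²(P_c, P_d)`. -/
theorem cut_paste_of_factorizing
    {T : Type*} [MeasurableSpace T] (lam : Measure T) [SigmaFinite lam]
    (m : ℕ) (hm : 1 ≤ m) (q : Fin m → Bool → T → ℝ≥0)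
    (hq : ∀ i b, Measurable (q i b))
    (P : (Fin m → Bool) → Measure T)
    (hP : ∀ b, P b = lam.withDensity (fun π => ∏ i, (q i (b i) π : ℝ≥0∞)))
    (hprob : ∀ b, IsProbabilityMeasure (P b))
    (a b c d : Fin m → Bool)
    (h : ∀ i, ({a i, b i} : Multiset Bool) = ({c i, d i} : Multiset Bool)) :
    (∀ᵐ π ∂lam,
        (∏ i, (q i (a i) π : ℝ≥0∞)) * ∏ i, (q i (b i) π : ℝ≥0∞)
          = (∏ i, (q i (c i) π : ℝ≥0∞)) * ∏ i, (q i (d i) π : ℝ≥0∞)) ∧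
      sqHellinger (P a) (P b) = sqHellinger (P c) (P d) :=
  cut_paste_of_factorizing_general lam m q hq P hP hprob a b c d h
end

section
/- Let a < b be real numbers, let c > 0, and let u0, u1 : [a,b] → ℝ be twice differentiable functions with u0''(x) ≥ c, u1''(x) ≥ c, and |u0'(x) − u1'(x)| ≤ √(2c) for all x ∈ [a,b]. Then the function u(x) = −log( (1/2)(e^{−u0(x)} + e^{−u1(x)}) ) is twice differentiable on [a,b] and satisfies u''(x) ≥ c/2 for all x ∈ [a,b]. (Equivalently: if dμ0 = e^{−u0}dx and dμ1 = e^{−u1}dx on [a,b] are c-log-concave and their potentials have derivatives within √(2c) of each other, then the mixture μ = (1/2)(μ0 + μ1) has density e^{−u} with u being (c/2)-strongly convex.) -/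
/-!
Writing `σ` for the logistic sigmoid,
`-log((e^{-u₀} + e^{-u₁})/2) = u₀ + log σ(u₁ - u₀) + log 2` and `(log σ)' = 1 - σ`.
Hence with the weight `p = σ(u₁ - u₀) ∈ [0, 1]` one gets `u' = p u₀' + (1 - p) u₁'` and
`u'' = p u₀'' + (1 - p) u₁'' - p (1 - p) (u₀' - u₁')²`: a weighted mean of the second
derivatives, which is `≥ c`, minus the variance of the first derivatives, which is
`≤ (1/4) · 2c` because `p (1 - p) ≤ 1/4`.
-/

open Real

theorem hasDerivAt_log_sigmoid (x : ℝ) :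
    HasDerivAt (fun y => log (sigmoid y)) (1 - sigmoid x) x := by
  convert (hasDerivAt_sigmoid x).log (sigmoid_pos x).ne' using 1
  field_simp [(sigmoid_pos x).ne']

theorem neg_log_half_mul_add_exp_neg (s t : ℝ) :
    -log (1 / 2 * (exp (-s) + exp (-t))) = s + log (sigmoid (t - s)) + log 2 := by
  have hsum : exp (-s) + exp (-t) = exp (-s) * (1 + exp (-(t - s))) := by
    rw [mul_add, mul_one, ← exp_add]; ring_nf
  rw [sigmoid_def, log_inv, hsum, log_mul (by norm_num) (by positivity),
    log_mul (by positivity) (by positivity), log_exp, one_div, log_inv]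
  ring

theorem div_two_le_weightedMean_sub_variance {p A B c d : ℝ} (hp₀ : 0 ≤ p) (hp₁ : p ≤ 1)
    (hA : c ≤ A) (hB : c ≤ B) (hd : d ^ 2 ≤ 2 * c) :
    c / 2 ≤ p * A + (1 - p) * B - p * (1 - p) * d ^ 2 := by
  have hmean : c ≤ p * A + (1 - p) * B := by nlinarith
  have hvar : p * (1 - p) ≤ 1 / 4 := by nlinarith [sq_nonneg (2 * p - 1)]
  nlinarith [mul_nonneg hp₀ (sub_nonneg.2 hp₁), sq_nonneg d]

section
variable {f g f' g' f'' g'' : ℝ → ℝ} {s : Set ℝ} {x : ℝ}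

theorem hasDerivWithinAt_neg_log_half_mul_add_exp_neg (hf : HasDerivWithinAt f (f' x) s x)
    (hg : HasDerivWithinAt g (g' x) s x) :
    HasDerivWithinAt (fun y => -log (1 / 2 * (exp (-f y) + exp (-g y))))
      (f' x + (1 - sigmoid (g x - f x)) * (g' x - f' x)) s x := by
  simp only [neg_log_half_mul_add_exp_neg]
  exact (hf.add ((hasDerivAt_log_sigmoid _).comp_hasDerivWithinAt x (hg.sub hf))).add_const _

theorem hasDerivWithinAt_add_one_sub_sigmoid_mul_sub (hf : HasDerivWithinAt f (f' x) s x)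
    (hg : HasDerivWithinAt g (g' x) s x) (hf' : HasDerivWithinAt f' (f'' x) s x)
    (hg' : HasDerivWithinAt g' (g'' x) s x) :
    HasDerivWithinAt (fun y => f' y + (1 - sigmoid (g y - f y)) * (g' y - f' y))
      (sigmoid (g x - f x) * f'' x + (1 - sigmoid (g x - f x)) * g'' x -
        sigmoid (g x - f x) * (1 - sigmoid (g x - f x)) * (g' x - f' x) ^ 2) s x := by
  have hσ : HasDerivWithinAt (fun y => sigmoid (g y - f y))
      (sigmoid (g x - f x) * (1 - sigmoid (g x - f x)) * (g' x - f' x)) s x :=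
    (hasDerivAt_sigmoid _).comp_hasDerivWithinAt x (hg.sub hf)
  refine (hf'.add ((hσ.const_sub 1).mul (hg'.sub hf'))).congr_deriv ?_
  simp only [Pi.sub_apply]
  ring
end

theorem mixture_strongly_logConcave_general
    (a b c : ℝ) (hc : 0 < c)
    (u0 u0' u0'' u1 u1' u1'' : ℝ → ℝ)
    (hu0 : ∀ x ∈ Set.Icc a b,
      HasDerivWithinAt u0 (u0' x) (Set.Icc a b) x ∧
      HasDerivWithinAt u0' (u0'' x) (Set.Icc a b) x ∧ c ≤ u0'' x)
    (hu1 : ∀ x ∈ Set.Icc a b,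
      HasDerivWithinAt u1 (u1' x) (Set.Icc a b) x ∧
      HasDerivWithinAt u1' (u1'' x) (Set.Icc a b) x ∧ c ≤ u1'' x)
    (hclose : ∀ x ∈ Set.Icc a b, |u0' x - u1' x| ≤ Real.sqrt (2 * c)) :
    ∃ u' u'' : ℝ → ℝ, ∀ x ∈ Set.Icc a b,
      HasDerivWithinAt (fun y => -Real.log ((1 / 2) * (Real.exp (-u0 y) + Real.exp (-u1 y))))
        (u' x) (Set.Icc a b) x ∧
      HasDerivWithinAt u' (u'' x) (Set.Icc a b) x ∧
      c / 2 ≤ u'' x := by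
  let p : ℝ → ℝ := fun y => sigmoid (u1 y - u0 y)
  refine ⟨fun y => u0' y + (1 - p y) * (u1' y - u0' y),
    fun y => p y * u0'' y + (1 - p y) * u1'' y - p y * (1 - p y) * (u1' y - u0' y) ^ 2,
    fun x hx => ?_⟩
  obtain ⟨h0, h0', hc0⟩ := hu0 x hx
  obtain ⟨h1, h1', hc1⟩ := hu1 x hx
  have hsq : (u1' x - u0' x) ^ 2 ≤ 2 * c := by
    calc (u1' x - u0' x) ^ 2 = |u0' x - u1' x| ^ 2 := by rw [sq_abs, ← neg_sub, neg_sq]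
      _ ≤ √(2 * c) ^ 2 := pow_le_pow_left₀ (abs_nonneg _) (hclose x hx) 2
      _ = 2 * c := sq_sqrt (by positivity)
  exact ⟨hasDerivWithinAt_neg_log_half_mul_add_exp_neg h0 h1,
    hasDerivWithinAt_add_one_sub_sigmoid_mul_sub h0 h1 h0' h1',
    div_two_le_weightedMean_sub_variance (sigmoid_nonneg _) (sigmoid_le_one _) hc0 hc1 hsq⟩

/-- **Strong log-concavity of a balanced mixture.** If `u0, u1` are twice differentiable on
`[a,b]` with `u0'' ≥ c`, `u1'' ≥ c` and `|u0' − u1'| ≤ √(2c)` there, then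
`u(x) = −log((1/2)(e^{−u0(x)} + e^{−u1(x)}))` is twice differentiable on `[a,b]` with
`u'' ≥ c/2` there. -/
theorem mixture_strongly_logConcave
    (a b c : ℝ) (hab : a < b) (hc : 0 < c)
    (u0 u0' u0'' u1 u1' u1'' : ℝ → ℝ)
    (hu0 : ∀ x ∈ Set.Icc a b,
      HasDerivWithinAt u0 (u0' x) (Set.Icc a b) x ∧
      HasDerivWithinAt u0' (u0'' x) (Set.Icc a b) x ∧ c ≤ u0'' x)
    (hu1 : ∀ x ∈ Set.Icc a b,
      HasDerivWithinAt u1 (u1' x) (Set.Icc a b) x ∧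
      HasDerivWithinAt u1' (u1'' x) (Set.Icc a b) x ∧ c ≤ u1'' x)
    (hclose : ∀ x ∈ Set.Icc a b, |u0' x - u1' x| ≤ Real.sqrt (2 * c)) :
    ∃ u' u'' : ℝ → ℝ, ∀ x ∈ Set.Icc a b,
      HasDerivWithinAt (fun y => -Real.log ((1 / 2) * (Real.exp (-u0 y) + Real.exp (-u1 y))))
        (u' x) (Set.Icc a b) x ∧
      HasDerivWithinAt u' (u'' x) (Set.Icc a b) x ∧
      c / 2 ≤ u'' x :=
  mixture_strongly_logConcave_general a b c hc u0 u0' u0'' u1 u1' u1'' hu0 hu1 hclose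
end

section
/- Let a < b be real numbers, let c > 0, and let U : [a,b] → ℝ be twice differentiable with U''(x) ≥ c for all x ∈ [a,b]. Let μ be the measure on ℝ with density e^{−U(x)} on [a,b] and density 0 outside [a,b], and assume μ is a probability measure. Then for every continuously differentiable 1-Lipschitz function f : ℝ → ℝ and every λ ≥ 0: Ent_μ(e^{λf}) ≤ (λ²/(2c))·∫ e^{λf} dμ. -/
/-!
This is the Bobkov–Ledoux argument. Put `Λ(s) = ∫ e^{sλf} dμ` and `K = λ²/(2c)`. Apply the
Prékopa–Leindler inequality with weight `1 - s` to `e^{-U}`, `e^{λf-U}` and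
`e^{s(1-s)K} e^{sλf-U}`. Its hypothesis follows from the `c`-strong convexity of `U`, the Lipschitz
bound on `λf` and AM-GM, and it gives `Λ(1)^s ≤ e^{s(1-s)K} Λ(s)`. Both sides agree at `s = 1`, so
the left derivative at `s = 1` of `log Λ(s) / s` is at most `K`; that derivative is
`Ent_μ(e^{λf}) / Λ(1)`.

Prékopa–Leindler on an interval follows by transporting both densities to the uniform measure on
`[0, 1]`. Weighted AM-GM then bounds the Jacobian of the interpolated map.
-/

open MeasureTheory
open scoped ENNReal NNReal Classical

noncomputable def entFun (μ : Measure ℝ) (g : ℝ → ℝ) : ℝ :=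
  (∫ x, g x * Real.log (g x) ∂μ) - (∫ x, g x ∂μ) * Real.log (∫ x, g x ∂μ)

open Set Filter Topology ProbabilityTheory

lemma exists_orderIso_hasDerivAt_symm {u : ℝ → ℝ} (hu : Continuous u) {δ : ℝ} (hδ : 0 < δ)
    (huδ : ∀ x, δ ≤ u x) (a : ℝ) :
    ∃ E : ℝ ≃o ℝ, (∀ x, E x = ∫ y in a..x, u y) ∧ ∀ y, HasDerivAt E.symm (u (E.symm y))⁻¹ y := by
  set A : ℝ → ℝ := fun x ↦ ∫ y in a..x, u y
  have hA : ∀ x, HasDerivAt A (u x) x := fun x ↦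
    intervalIntegral.integral_hasDerivAt_right (hu.intervalIntegrable a x)
      (hu.stronglyMeasurableAtFilter _ _) hu.continuousAt
  have hA_cont : Continuous A := continuous_iff_continuousAt.2 fun x ↦ (hA x).continuousAt
  have hA_mono : StrictMono A := strictMono_of_hasDerivAt_pos hA fun x ↦ hδ.trans_le (huδ x)
  have hA_lin : Monotone fun x ↦ A x - δ * x :=
    monotone_of_hasDerivAt_nonneg (fun x ↦ (hA x).sub ((hasDerivAt_id x).const_mul δ))
      fun x ↦ by simpa using huδ x
  have h_lin : Tendsto (fun x ↦ A 0 + δ * x) atTop atTop ∧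
      Tendsto (fun x ↦ A 0 + δ * x) atBot atBot :=
    ⟨tendsto_atTop_add_const_left _ _ (tendsto_id.const_mul_atTop hδ),
      tendsto_atBot_add_const_left _ _ (tendsto_id.const_mul_atBot hδ)⟩
  have hA_surj : Function.Surjective A := by
    refine hA_cont.surjective (tendsto_atTop_mono' _ ?_ h_lin.1)
      (tendsto_atBot_mono' _ ?_ h_lin.2)
    · filter_upwards [eventually_ge_atTop 0] with x hx
      linarith [hA_lin hx]
    · filter_upwards [eventually_le_atBot 0] with x hx
      linarith [hA_lin hx]
  set E := hA_mono.orderIsoOfSurjective A hA_surj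
  refine ⟨E, fun x ↦ rfl, fun y ↦ ?_⟩
  exact HasDerivAt.of_local_left_inverse E.symm.continuous.continuousAt (hA _)
    (hδ.trans_le (huδ _)).ne' (Eventually.of_forall E.apply_symm_apply)

lemma exists_transport_Icc {a b : ℝ} (hab : a < b) {u : ℝ → ℝ} (hu : ContinuousOn u (Icc a b))
    (hu_pos : ∀ x ∈ Icc a b, 0 < u x) :
    ∃ X : ℝ → ℝ, X 0 = a ∧ X 1 = b ∧ MapsTo X (Icc 0 1) (Icc a b) ∧
      ∀ s ∈ Icc (0 : ℝ) 1, HasDerivAt X ((∫ x in a..b, u x) / u (X s)) s := by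
  -- Extended by constants outside `[a, b]`, `u` has a primitive that is a bijection of `ℝ`.
  set ũ : ℝ → ℝ := fun x ↦ u (projIcc a b hab.le x)
  have hũ : Continuous ũ := hu.comp_continuous (continuous_subtype_val.comp continuous_projIcc)
    fun x ↦ (projIcc a b hab.le x).2
  have hũ_eq : EqOn ũ u (Icc a b) := fun x hx ↦ by simp [ũ, projIcc_of_mem _ hx]
  obtain ⟨m, hm, hm_min⟩ := isCompact_Icc.exists_isMinOn (nonempty_Icc.2 hab.le) hu
  obtain ⟨E, hE, hE_symm⟩ := exists_orderIso_hasDerivAt_symm hũ (hu_pos m hm)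
    (fun x ↦ hm_min (projIcc a b hab.le x).2) a
  have hEa : E a = 0 := by simp [hE]
  have hEb : E b = ∫ x in a..b, u x := by
    rw [hE]
    exact intervalIntegral.integral_congr fun x hx ↦ hũ_eq (by rwa [uIcc_of_le hab.le] at hx)
  set I := ∫ x in a..b, u x
  have hI : 0 ≤ I := hEb ▸ hEa ▸ E.monotone hab.le
  set X : ℝ → ℝ := fun s ↦ E.symm (s * I)
  have hX_mono : Monotone X := fun s t hst ↦ E.symm.monotone (by gcongr)
  have hX0 : X 0 = a := by rw [← E.symm_apply_apply a, hEa]; simp [X]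
  have hX1 : X 1 = b := by rw [← E.symm_apply_apply b, hEb]; simp [X]
  have hX_maps : MapsTo X (Icc 0 1) (Icc a b) := fun s hs ↦
    ⟨hX0 ▸ hX_mono hs.1, hX1 ▸ hX_mono hs.2⟩
  refine ⟨X, hX0, hX1, hX_maps, fun s hs ↦ ?_⟩
  have := (hE_symm (s * I)).comp s (hasDerivAt_mul_const I)
  rwa [inv_mul_eq_div, hũ_eq (hX_maps hs)] at this

lemma rpow_mul_rpow_le_mul_weighted_mean {t p q r I J : ℝ} (ht₀ : 0 ≤ t) (ht₁ : t ≤ 1)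
    (hp : 0 < p) (hq : 0 < q) (hI : 0 ≤ I) (hJ : 0 ≤ J) (hr : p ^ t * q ^ (1 - t) ≤ r) :
    I ^ t * J ^ (1 - t) ≤ r * (t * (I / p) + (1 - t) * (J / q)) :=
  calc I ^ t * J ^ (1 - t) = (p ^ t * q ^ (1 - t)) * ((I / p) ^ t * (J / q) ^ (1 - t)) := by
        rw [Real.div_rpow hI hp.le, Real.div_rpow hJ hq.le]
        field_simp
    _ ≤ r * (t * (I / p) + (1 - t) * (J / q)) :=
        mul_le_mul hr (Real.geom_mean_le_arith_mean2_weighted ht₀ (sub_nonneg.2 ht₁)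
          (div_nonneg hI hp.le) (div_nonneg hJ hq.le) (by ring)) (by positivity)
          ((by positivity : (0 : ℝ) ≤ _).trans hr)

theorem intervalIntegral_prekopa_leindler {a b t : ℝ} (hab : a < b) (ht₀ : 0 ≤ t) (ht₁ : t ≤ 1)
    {u v w : ℝ → ℝ} (hu : ContinuousOn u (Icc a b)) (hv : ContinuousOn v (Icc a b))
    (hw : ContinuousOn w (Icc a b)) (hu_pos : ∀ x ∈ Icc a b, 0 < u x)
    (hv_pos : ∀ x ∈ Icc a b, 0 < v x)
    (huvw : ∀ x ∈ Icc a b, ∀ y ∈ Icc a b, u x ^ t * v y ^ (1 - t) ≤ w (t * x + (1 - t) * y)) :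
    (∫ x in a..b, u x) ^ t * (∫ x in a..b, v x) ^ (1 - t) ≤ ∫ x in a..b, w x := by
  obtain ⟨X, hX0, hX1, hX_maps, hX⟩ := exists_transport_Icc hab hu hu_pos
  obtain ⟨Y, hY0, hY1, hY_maps, hY⟩ := exists_transport_Icc hab hv hv_pos
  set I := ∫ x in a..b, u x
  set J := ∫ x in a..b, v x
  have hI : 0 ≤ I := intervalIntegral.integral_nonneg hab.le fun x hx ↦ (hu_pos x hx).le
  have hJ : 0 ≤ J := intervalIntegral.integral_nonneg hab.le fun x hx ↦ (hv_pos x hx).le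
  set Z : ℝ → ℝ := fun s ↦ t * X s + (1 - t) * Y s
  set Z' : ℝ → ℝ := fun s ↦ t * (I / u (X s)) + (1 - t) * (J / v (Y s))
  have h01 : uIcc (0 : ℝ) 1 = Icc 0 1 := uIcc_of_le zero_le_one
  have hZ : ∀ s ∈ uIcc (0 : ℝ) 1, HasDerivAt Z (Z' s) s := fun s hs ↦
    ((hX s (h01 ▸ hs)).const_mul t).add ((hY s (h01 ▸ hs)).const_mul (1 - t))
  have hZ_maps : MapsTo Z (Icc 0 1) (Icc a b) := fun s hs ↦
    (convex_Icc a b) (hX_maps hs) (hY_maps hs) ht₀ (sub_nonneg.2 ht₁) (by ring)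
  have hZ' : ContinuousOn Z' (uIcc 0 1) := by
    have hXc : ContinuousOn X (Icc 0 1) := fun s hs ↦ (hX s hs).continuousAt.continuousWithinAt
    have hYc : ContinuousOn Y (Icc 0 1) := fun s hs ↦ (hY s hs).continuousAt.continuousWithinAt
    rw [h01]
    exact (continuousOn_const.mul (continuousOn_const.div (hu.comp hXc hX_maps)
      fun s hs ↦ (hu_pos _ (hX_maps hs)).ne')).add (continuousOn_const.mul
      (continuousOn_const.div (hv.comp hYc hY_maps) fun s hs ↦ (hv_pos _ (hY_maps hs)).ne'))
  have hpointwise : ∀ s ∈ Icc (0 : ℝ) 1, I ^ t * J ^ (1 - t) ≤ w (Z s) * Z' s := fun s hs ↦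
    rpow_mul_rpow_le_mul_weighted_mean ht₀ ht₁ (hu_pos _ (hX_maps hs)) (hv_pos _ (hY_maps hs))
      hI hJ (huvw _ (hX_maps hs) _ (hY_maps hs))
  calc I ^ t * J ^ (1 - t) = ∫ s in (0 : ℝ)..1, I ^ t * J ^ (1 - t) := by simp
    _ ≤ ∫ s in (0 : ℝ)..1, (w ∘ Z) s * Z' s := by
        refine intervalIntegral.integral_mono_on zero_le_one intervalIntegrable_const ?_ hpointwise
        have hZc : ContinuousOn Z (Icc 0 1) := fun s hs ↦
          (hZ s (h01 ▸ hs)).continuousAt.continuousWithinAt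
        exact ((hw.comp hZc hZ_maps).mul (h01 ▸ hZ')).intervalIntegrable_of_Icc zero_le_one
    _ = ∫ x in a..b, w x := by
        rw [intervalIntegral.integral_comp_mul_deriv' hZ hZ'
          (hw.mono (h01 ▸ hZ_maps.image_subset))]
        simp only [Z, hX0, hX1, hY0, hY1]
        congr 1 <;> ring

lemma strongConvexOn_of_hasDerivWithinAt2 {D : Set ℝ} (hD : Convex ℝ D) {m : ℝ}
    {f f' f'' : ℝ → ℝ} (hf : ContinuousOn f D)
    (hf' : ∀ x ∈ interior D, HasDerivWithinAt f (f' x) (interior D) x)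
    (hf'' : ∀ x ∈ interior D, HasDerivWithinAt f' (f'' x) (interior D) x)
    (hm : ∀ x ∈ interior D, m ≤ f'' x) : StrongConvexOn D m f := by
  rw [strongConvexOn_iff_convex]
  simp only [Real.norm_eq_abs, sq_abs]
  refine convexOn_of_hasDerivWithinAt2_nonneg (f' := fun x ↦ f' x - m * x)
    (f'' := fun x ↦ f'' x - m) hD (hf.sub (by fun_prop)) (fun x hx ↦ ?_) (fun x hx ↦ ?_)
    fun x hx ↦ sub_nonneg.2 (hm x hx)
  · exact (hf' x hx).fun_sub ((hasDerivAt_pow 2 x).const_mul (m / 2)).hasDerivWithinAt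
      |>.congr_deriv (by push_cast; ring)
  · exact (hf'' x hx).fun_sub ((hasDerivAt_id' x).const_mul m).hasDerivWithinAt |>.congr_deriv
      (by ring)

lemma integral_withDensity_Icc_eq_intervalIntegral {a b : ℝ} (hab : a ≤ b) {ρ : ℝ → ℝ}
    (hρ : AEMeasurable ρ (volume.restrict (Icc a b))) (hρ₀ : ∀ x ∈ Icc a b, 0 ≤ ρ x)
    (φ : ℝ → ℝ) :
    ∫ x, φ x ∂(volume.restrict (Icc a b)).withDensity (fun x ↦ ENNReal.ofReal (ρ x)) =
      ∫ x in a..b, ρ x * φ x := by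
  rw [integral_withDensity_eq_integral_toReal_smul₀ hρ.ennreal_ofReal
    (Eventually.of_forall fun _ ↦ ENNReal.ofReal_lt_top), intervalIntegral.integral_of_le hab,
    ← integral_Icc_eq_integral_Ioc]
  refine setIntegral_congr_fun measurableSet_Icc fun x hx ↦ ?_
  simp [ENNReal.toReal_ofReal (hρ₀ x hx)]

lemma StrongConvexOn.add_lipschitz_increment_le {D : Set ℝ} {c : ℝ} (hc : 0 < c) {U : ℝ → ℝ}
    (hU : StrongConvexOn D c U) {g : ℝ → ℝ} {L : ℝ≥0} (hg : LipschitzOnWith L g D) {x y s : ℝ}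
    (hx : x ∈ D) (hy : y ∈ D) (hs₀ : 0 ≤ s) (hs₁ : s ≤ 1) :
    U ((1 - s) * x + s * y) + s * (g y - g ((1 - s) * x + s * y)) ≤
      (1 - s) * U x + s * U y + s * (1 - s) * (L ^ 2 / (2 * c)) := by
  set z := (1 - s) * x + s * y
  set K := (L : ℝ) ^ 2 / (2 * c)
  have hconv := hU.2 hx hy (sub_nonneg.2 hs₁) hs₀ (sub_add_cancel 1 s)
  simp only [smul_eq_mul, Real.norm_eq_abs] at hconv
  have hz : z ∈ D := hU.1 hx hy (sub_nonneg.2 hs₁) hs₀ (sub_add_cancel 1 s)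
  have hlip : g y - g z ≤ (1 - s) * (L * |x - y|) :=
    calc g y - g z ≤ |g y - g z| := le_abs_self _
      _ ≤ L * |y - z| := by simpa only [Real.dist_eq] using hg.dist_le_mul y hy z hz
      _ = (1 - s) * (L * |x - y|) := by
        rw [show y - z = (1 - s) * (y - x) by ring, abs_mul, abs_of_nonneg (sub_nonneg.2 hs₁),
          abs_sub_comm]
        ring
  have hamgm : (L : ℝ) * |x - y| ≤ K + c / 2 * |x - y| ^ 2 := by
    have hK : K * (2 * c) = L ^ 2 := div_mul_cancel₀ _ (by positivity)
    nlinarith [sq_nonneg ((L : ℝ) - c * |x - y|)]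
  nlinarith [mul_le_mul_of_nonneg_left hlip hs₀,
    mul_le_mul_of_nonneg_left hamgm (mul_nonneg hs₀ (sub_nonneg.2 hs₁))]

theorem mgf_rpow_le_of_strongConvexOn {a b c : ℝ} (hab : a < b) (hc : 0 < c) {U : ℝ → ℝ}
    (hU : StrongConvexOn (Icc a b) c U) (hUc : ContinuousOn U (Icc a b)) {μ : Measure ℝ}
    (hμ : μ = (volume.restrict (Icc a b)).withDensity fun x ↦ ENNReal.ofReal (Real.exp (-U x)))
    [IsProbabilityMeasure μ] {g : ℝ → ℝ} {L : ℝ≥0} (hg : LipschitzOnWith L g (Icc a b))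
    {s : ℝ} (hs₀ : 0 ≤ s) (hs₁ : s ≤ 1) :
    mgf g μ 1 ^ s ≤ Real.exp (s * (1 - s) * (L ^ 2 / (2 * c))) * mgf g μ s := by
  have hμ_eq (φ : ℝ → ℝ) : ∫ x, φ x ∂μ = ∫ x in a..b, Real.exp (-U x) * φ x := by
    rw [hμ]
    exact integral_withDensity_Icc_eq_intervalIntegral hab.le
      ((Real.continuous_exp.comp_continuousOn hUc.neg).aemeasurable measurableSet_Icc)
      (fun x _ ↦ (Real.exp_pos _).le) φ
  have hZ : ∫ x in a..b, Real.exp (-U x) = 1 := by simpa using (hμ_eq fun _ ↦ 1).symm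
  have hgc : ContinuousOn g (Icc a b) := hg.continuousOn
  have hPL := intervalIntegral_prekopa_leindler hab (sub_nonneg.2 hs₁) (sub_le_self 1 hs₀)
    (u := fun x ↦ Real.exp (-U x)) (v := fun x ↦ Real.exp (-U x) * Real.exp (1 * g x))
    (w := fun x ↦ Real.exp (s * (1 - s) * (L ^ 2 / (2 * c))) *
      (Real.exp (-U x) * Real.exp (s * g x)))
    (by fun_prop) (by fun_prop) (by fun_prop) (fun _ _ ↦ Real.exp_pos _) (fun _ _ ↦ by positivity)
    ?_
  · rwa [intervalIntegral.integral_const_mul, hZ, Real.one_rpow, one_mul, sub_sub_cancel,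
      ← hμ_eq, ← hμ_eq] at hPL
  intro x hx y hy
  simp only [sub_sub_cancel, ← Real.exp_add, ← Real.exp_mul, Real.exp_le_exp]
  linarith [hU.add_lipschitz_increment_le hc hg hx hy hs₀ hs₁]

lemma HasDerivAt.le_of_slope_le {ψ : ℝ → ℝ} {x d K : ℝ} (hψ : HasDerivAt ψ d x)
    (hK : ∀ᶠ s in 𝓝[<] x, slope ψ x s ≤ K) : d ≤ K :=
  le_of_tendsto
    ((hasDerivWithinAt_iff_tendsto_slope' (s := Iio x) (lt_irrefl x)).1 hψ.hasDerivWithinAt) hK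

theorem entFun_exp_le_of_mgf_rpow_le {μ : Measure ℝ} [NeZero μ] {g : ℝ → ℝ}
    (hg : 1 ∈ interior (integrableExpSet g μ)) {K : ℝ}
    (hK : ∀ s ∈ Ioo (0 : ℝ) 1, mgf g μ 1 ^ s ≤ Real.exp (s * (1 - s) * K) * mgf g μ s) :
    entFun μ (fun x ↦ Real.exp (g x)) ≤ K * mgf g μ 1 := by
  have hΛ : 0 < mgf g μ 1 := mgf_pos' (NeZero.ne μ) (interior_subset (a := (1 : ℝ)) hg)
  set D := μ[fun x ↦ g x * Real.exp (1 * g x)]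
  have hψ : HasDerivAt (fun s ↦ cgf g μ s / s) (D / mgf g μ 1 - cgf g μ 1) 1 := by
    refine ((hasDerivAt_mgf hg).log hΛ.ne').fun_div (hasDerivAt_id' 1) one_ne_zero
      |>.congr_deriv ?_
    simp [cgf, D]
  have hslope : ∀ s ∈ Ioo (0 : ℝ) 1, slope (fun s ↦ cgf g μ s / s) 1 s ≤ K := by
    rintro s ⟨hs₀, hs₁⟩
    have hΛs : 0 < mgf g μ s :=
      pos_of_mul_pos_right ((Real.rpow_pos_of_pos hΛ s).trans_le (hK s ⟨hs₀, hs₁⟩))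
        (Real.exp_pos _).le
    have hlog := Real.log_le_log (Real.rpow_pos_of_pos hΛ s) (hK s ⟨hs₀, hs₁⟩)
    rw [Real.log_rpow hΛ, Real.log_mul (Real.exp_pos _).ne' hΛs.ne', Real.log_exp] at hlog
    rw [slope_def_field, div_le_iff_of_neg (by linarith), le_sub_iff_add_le, div_one,
      le_div_iff₀ hs₀]
    simp only [cgf]
    nlinarith
  have hd := hψ.le_of_slope_le (eventually_of_mem (Ioo_mem_nhdsLT zero_lt_one) hslope)
  have hEnt : entFun μ (fun x ↦ Real.exp (g x)) = mgf g μ 1 * (D / mgf g μ 1 - cgf g μ 1) := by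
    rw [mul_sub, mul_div_cancel₀ _ hΛ.ne']
    simp only [entFun, Real.log_exp, mgf, cgf, D, one_mul, mul_comm (g _)]
  rw [hEnt, mul_comm K]
  exact mul_le_mul_of_nonneg_left hd hΛ.le

lemma integrableExpSet_eq_univ_of_ae_mem {Ω : Type*} [TopologicalSpace Ω] [MeasurableSpace Ω]
    [OpensMeasurableSpace Ω] {μ : Measure Ω} [IsFiniteMeasure μ] {K : Set Ω} (hK : IsCompact K)
    (hμK : ∀ᵐ x ∂μ, x ∈ K) {g : Ω → ℝ} (hg : Continuous g) : integrableExpSet g μ = univ := by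
  obtain ⟨M, hM⟩ := hK.exists_bound_of_continuousOn hg.continuousOn
  refine eq_univ_of_forall fun t ↦
    integrable_exp_mul_of_mem_Icc (a := -M) (b := M) hg.aemeasurable ?_
  filter_upwards [hμK] with x hx
  exact abs_le.1 (hM x hx)

theorem entropy_exp_le_of_strongly_logConcave_on_Icc_general
    (a b c : ℝ) (hab : a < b) (hc : 0 < c)
    (U U' U'' : ℝ → ℝ)
    (hU : ∀ x ∈ Set.Icc a b,
      HasDerivWithinAt U (U' x) (Set.Icc a b) x ∧
      HasDerivWithinAt U' (U'' x) (Set.Icc a b) x ∧ c ≤ U'' x)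
    (μ : Measure ℝ)
    (hμ : μ = (volume.restrict (Set.Icc a b)).withDensity
      (fun x => ENNReal.ofReal (Real.exp (-U x))))
    (hprob : IsProbabilityMeasure μ)
    (f : ℝ → ℝ)
    (hlip : LipschitzWith 1 f)
    (l : ℝ) :
    entFun μ (fun x => Real.exp (l * f x))
      ≤ l ^ 2 / (2 * c) * ∫ x, Real.exp (l * f x) ∂μ := by
  have hUc : ContinuousOn U (Icc a b) := fun x hx ↦ (hU x hx).1.continuousWithinAt
  have hU_convex : StrongConvexOn (Icc a b) c U := by
    refine strongConvexOn_of_hasDerivWithinAt2 (convex_Icc a b) hUc (f' := U') (f'' := U'')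
      ?_ ?_ ?_ <;> simp only [interior_Icc] <;> intro x hx
    · exact (hU x (Ioo_subset_Icc_self hx)).1.mono Ioo_subset_Icc_self
    · exact (hU x (Ioo_subset_Icc_self hx)).2.1.mono Ioo_subset_Icc_self
    · exact (hU x (Ioo_subset_Icc_self hx)).2.2
  have hμ_Icc : ∀ᵐ x ∂μ, x ∈ Icc a b := by
    rw [hμ]
    exact (withDensity_absolutelyContinuous _ _).ae_le (ae_restrict_mem measurableSet_Icc)
  have hlf : LipschitzWith ‖l‖₊ fun x ↦ l * f x := by
    simpa [Function.comp_def] using (lipschitzWith_smul l).comp hlip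
  have h := entFun_exp_le_of_mgf_rpow_le (μ := μ) (g := fun x ↦ l * f x)
    (by simp [integrableExpSet_eq_univ_of_ae_mem isCompact_Icc hμ_Icc hlf.continuous])
    fun s hs ↦ mgf_rpow_le_of_strongConvexOn hab hc hU_convex hUc hμ hlf.lipschitzOnWith
      hs.1.le hs.2.le
  simpa [mgf] using h

/-- **Log-Sobolev-type entropy bound for strongly log-concave measures on an interval.**
If `μ` has density `e^{−U}` on `[a,b]` (and `0` outside) with `U'' ≥ c > 0` on `[a,b]`,
and `μ` is a probability measure, then for every continuously differentiable 1-Lipschitz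
`f : ℝ → ℝ` and every `λ ≥ 0`, `Ent_μ(e^{λf}) ≤ (λ²/(2c))·∫ e^{λf} dμ`. -/
theorem entropy_exp_le_of_strongly_logConcave_on_Icc
    (a b c : ℝ) (hab : a < b) (hc : 0 < c)
    (U U' U'' : ℝ → ℝ)
    (hU : ∀ x ∈ Set.Icc a b,
      HasDerivWithinAt U (U' x) (Set.Icc a b) x ∧
      HasDerivWithinAt U' (U'' x) (Set.Icc a b) x ∧ c ≤ U'' x)
    (μ : Measure ℝ)
    (hμ : μ = (volume.restrict (Set.Icc a b)).withDensity
      (fun x => ENNReal.ofReal (Real.exp (-U x))))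
    (hprob : IsProbabilityMeasure μ)
    (f f' : ℝ → ℝ) (hf : ∀ x, HasDerivAt f (f' x) x) (hf' : Continuous f')
    (hlip : LipschitzWith 1 f)
    (l : ℝ) (hl : 0 ≤ l) :
    entFun μ (fun x => Real.exp (l * f x))
      ≤ l ^ 2 / (2 * c) * ∫ x, Real.exp (l * f x) ∂μ :=
  entropy_exp_le_of_strongly_logConcave_on_Icc_general a b c hab hc U U' U'' hU μ hμ hprob f hlip l
end

section
/- Let 𝒳 and 𝒯 be measurable spaces, let c > 0, and let μ, μ' be probability measures on 𝒳 with μ(A) ≥ c·μ'(A) for every measurable set A. Then for every Markov kernel κ from 𝒳 to 𝒯: ∫ KL(κ(x) ‖ μ⋆κ) dμ(x) ≥ c·∫ KL(κ(x) ‖ μ'⋆κ) dμ'(x). (In mutual-information terms: if Π(X) is a randomized function of X, then I(X; Π(X)) for X ∼ μ is at least c times I(X'; Π(X')) for X' ∼ μ'.) -/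
open MeasureTheory ProbabilityTheory
open scoped ENNReal NNReal Classical

/-- Kullback–Leibler divergence `KL(ν‖μ) = ∫ log (dν/dμ) dν` if `ν ≪ μ` (and the
log-likelihood ratio is integrable), and `+∞` otherwise. -/
noncomputable def klDiv {α : Type*} [MeasurableSpace α] (ν μ : Measure α) : ℝ≥0∞ :=
  if ν ≪ μ ∧ Integrable (fun x => Real.log ((ν.rnDeriv μ x).toReal)) ν
  then ENNReal.ofReal (∫ x, Real.log ((ν.rnDeriv μ x).toReal) ∂ν)
  else ⊤


/-!
Write `η = μ' ⋆ κ` and `ν = μ ⋆ κ`. From `c μ' ≤ μ` we get `c η ≤ ν`, so `g = dη/dν ≤ c⁻¹`.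
For every `x` with `KL(κ x ‖ ν) < ∞` the chain rule for densities gives
`KL(κ x ‖ η) = KL(κ x ‖ ν) - ∫ log g d(κ x)`, and averaging over `x ∼ μ'` turns the last integral
into `KL(η ‖ ν) ≥ 0`. Hence `∫ KL(κ x ‖ η) dμ' ≤ ∫ KL(κ x ‖ ν) dμ'`, and `c μ' ≤ μ` concludes.
Since `log g ≤ g ≤ c⁻¹`, all these terms can be handled as lintegrals of the nonnegative `c⁻¹ - log g`,
which makes them finite whenever the right-hand side is.
-/

section LogLikelihoodRatio

variable {α : Type*} [MeasurableSpace α] {ρ η ν : Measure α}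

lemma klDiv_eq_ofReal_integral_llr (hρν : ρ ≪ ν) (hint : Integrable (llr ρ ν) ρ) :
    klDiv ρ ν = ENNReal.ofReal (∫ t, llr ρ ν t ∂ρ) :=
  if_pos ⟨hρν, hint⟩

lemma klDiv_eq_top (h : ¬(ρ ≪ ν ∧ Integrable (llr ρ ν) ρ)) : klDiv ρ ν = ⊤ :=
  if_neg h

lemma integral_llr_nonneg [IsProbabilityMeasure ρ] [IsProbabilityMeasure ν] (hρν : ρ ≪ ν)
    (hint : Integrable (llr ρ ν) ρ) : 0 ≤ ∫ t, llr ρ ν t ∂ρ := by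
  simpa using InformationTheory.integral_llr_add_sub_measure_univ_nonneg hρν hint

lemma absolutelyContinuous_of_ae_rnDeriv_ne_zero (hρν : ρ ≪ ν)
    (h : ∀ᵐ t ∂ρ, η.rnDeriv ν t ≠ 0) : ρ ≪ η := by
  refine Measure.AbsolutelyContinuous.mk fun E hE hηE => ?_
  have hzero : ∀ᵐ t ∂ν.restrict E, η.rnDeriv ν t = 0 :=
    (lintegral_eq_zero_iff (Measure.measurable_rnDeriv η ν)).1 <|
      le_antisymm ((Measure.setLIntegral_rnDeriv_le E).trans hηE.le) zero_le
  rw [ae_restrict_iff' hE] at hzero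
  rw [measure_eq_zero_iff_ae_notMem]
  filter_upwards [hρν.ae_le hzero, h] with t hzero ht htE using ht (hzero htE)

lemma llr_ae_eq_llr_add_llr [SigmaFinite ρ] [SigmaFinite η] [SigmaFinite ν]
    (hρη : ρ ≪ η) (hρν : ρ ≪ ν) : llr ρ ν =ᵐ[ρ] fun t => llr ρ η t + llr η ν t := by
  filter_upwards [hρν.ae_le (Measure.rnDeriv_mul_rnDeriv hρη), Measure.rnDeriv_pos hρν,
    hρν.ae_le (Measure.rnDeriv_lt_top ρ ν)] with t hmul hpos hfin
  have hne : (ρ.rnDeriv ν t).toReal ≠ 0 := (ENNReal.toReal_pos hpos.ne' hfin.ne).ne'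
  rw [← hmul, Pi.mul_apply, ENNReal.toReal_mul] at hne
  simp only [llr_def]
  rw [← hmul, Pi.mul_apply, ENNReal.toReal_mul,
    Real.log_mul (left_ne_zero_of_mul hne) (right_ne_zero_of_mul hne)]

lemma integrable_llr_of_toReal_rnDeriv_le [IsFiniteMeasure η] [IsFiniteMeasure ν] (hην : η ≪ ν)
    {C : ℝ} (hC : ∀ᵐ t ∂ν, (η.rnDeriv ν t).toReal ≤ C) : Integrable (llr η ν) η := by
  rw [← integrable_rnDeriv_mul_log_iff hην]
  refine Integrable.of_bound (by fun_prop) (1 + C ^ 2) ?_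
  filter_upwards [hC] with t ht
  set x := (η.rnDeriv ν t).toReal
  have hx : 0 ≤ x := ENNReal.toReal_nonneg
  have hlow : x - 1 ≤ x * Real.log x := Real.self_sub_one_le_mul_log hx
  have hup : x * Real.log x ≤ x * x := mul_le_mul_of_nonneg_left (Real.log_le_self hx) hx
  rw [Real.norm_eq_abs, abs_le]
  constructor <;> nlinarith

lemma toReal_rnDeriv_le_of_smul_le [IsFiniteMeasure η] [SigmaFinite ν] {c : ℝ} (hc : 0 < c)
    (h : ENNReal.ofReal c • η ≤ ν) : ∀ᵐ t ∂ν, (η.rnDeriv ν t).toReal ≤ c⁻¹ := by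
  filter_upwards [Measure.rnDeriv_le_one_of_le h,
    Measure.rnDeriv_smul_left_of_ne_top η ν ENNReal.ofReal_ne_top] with t hle hsmul
  rw [hsmul, Pi.smul_apply, smul_eq_mul, Pi.one_apply] at hle
  have := ENNReal.toReal_mono ENNReal.one_ne_top hle
  rw [ENNReal.toReal_mul, ENNReal.toReal_ofReal hc.le, ENNReal.toReal_one] at this
  rw [← one_div, le_div_iff₀ hc]
  linarith

lemma klDiv_add_le_klDiv_add_lintegral [IsProbabilityMeasure ρ] [IsProbabilityMeasure η]
    [SigmaFinite ν] {M : ℝ} (hM : 0 ≤ M)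
    (h : ∀ᵐ t ∂ρ, η.rnDeriv ν t ≠ 0 ∧ llr η ν t ≤ M) :
    klDiv ρ η + ENNReal.ofReal M
      ≤ klDiv ρ ν + ∫⁻ t, ENNReal.ofReal (M - llr η ν t) ∂ρ := by
  by_cases hρν : ρ ≪ ν ∧ Integrable (llr ρ ν) ρ
  swap
  · simp [klDiv_eq_top hρν]
  obtain ⟨hρν, hint⟩ := hρν
  have hgap_nonneg : 0 ≤ᵐ[ρ] fun t => M - llr η ν t := h.mono fun t ht => sub_nonneg.2 ht.2
  by_cases hgap_fin : ∫⁻ t, ENNReal.ofReal (M - llr η ν t) ∂ρ = ⊤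
  · simp [hgap_fin]
  have hgap : Integrable (fun t => M - llr η ν t) ρ :=
    ⟨by fun_prop, (hasFiniteIntegral_iff_ofReal hgap_nonneg).2 (lt_top_iff_ne_top.2 hgap_fin)⟩
  have hL : Integrable (llr η ν) ρ :=
    ((integrable_const M).sub hgap).congr (.of_forall fun t => sub_sub_cancel M _)
  have hρη := absolutelyContinuous_of_ae_rnDeriv_ne_zero hρν (h.mono fun _ => And.left)
  have hdecomp := llr_ae_eq_llr_add_llr hρη hρν
  have hint' : Integrable (llr ρ η) ρ :=
    (hint.sub hL).congr (hdecomp.mono fun t ht => by simp [ht])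
  have hsplit : ∫ t, llr ρ ν t ∂ρ = ∫ t, llr ρ η t ∂ρ + ∫ t, llr η ν t ∂ρ := by
    rw [integral_congr_ae hdecomp, integral_add hint' hL]
  have hgap_integral : ∫ t, (M - llr η ν t) ∂ρ = M - ∫ t, llr η ν t ∂ρ := by
    rw [integral_sub (integrable_const M) hL, integral_const, probReal_univ, one_smul]
  rw [klDiv_eq_ofReal_integral_llr hρη hint', klDiv_eq_ofReal_integral_llr hρν hint,
    ← ofReal_integral_eq_lintegral_ofReal hgap hgap_nonneg,
    ← ENNReal.ofReal_add (integral_llr_nonneg hρη hint') hM]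
  calc ENNReal.ofReal (∫ t, llr ρ η t ∂ρ + M)
      = ENNReal.ofReal (∫ t, llr ρ ν t ∂ρ + ∫ t, (M - llr η ν t) ∂ρ) := by
        rw [hsplit, hgap_integral]; ring_nf
    _ ≤ _ := ENNReal.ofReal_add_le

lemma lintegral_ofReal_sub_llr_le [IsProbabilityMeasure η] [IsProbabilityMeasure ν] (hην : η ≪ ν)
    (hint : Integrable (llr η ν) η) {M : ℝ} (hM : ∀ᵐ t ∂η, llr η ν t ≤ M) :
    ∫⁻ t, ENNReal.ofReal (M - llr η ν t) ∂η ≤ ENNReal.ofReal M := by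
  have hgap : Integrable (fun t => M - llr η ν t) η := (integrable_const M).sub hint
  rw [← ofReal_integral_eq_lintegral_ofReal hgap (hM.mono fun t ht => sub_nonneg.2 ht),
    integral_sub (integrable_const M) hint, integral_const, probReal_univ, one_smul]
  exact ENNReal.ofReal_le_ofReal (by linarith [integral_llr_nonneg hην hint])

end LogLikelihoodRatio

lemma comp_mono_right {X T : Type*} [MeasurableSpace X] [MeasurableSpace T] {μ₁ μ₂ : Measure X}
    (h : μ₁ ≤ μ₂) (κ : Kernel X T) : κ ∘ₘ μ₁ ≤ κ ∘ₘ μ₂ :=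
  Measure.le_iff.2 fun s hs => by
    simp only [Measure.bind_apply hs κ.aemeasurable]
    exact lintegral_mono' h le_rfl

theorem lintegral_klDiv_comp_le {X T : Type*} [MeasurableSpace X] [MeasurableSpace T]
    (μ : Measure X) [IsProbabilityMeasure μ] (κ : Kernel X T) [IsMarkovKernel κ]
    {ν : Measure T} [IsProbabilityMeasure ν] (hν : κ ∘ₘ μ ≪ ν) {C : ℝ}
    (hC : ∀ᵐ t ∂ν, ((κ ∘ₘ μ).rnDeriv ν t).toReal ≤ C) :
    ∫⁻ x, klDiv (κ x) (κ ∘ₘ μ) ∂μ ≤ ∫⁻ x, klDiv (κ x) ν ∂μ := by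
  set η := κ ∘ₘ μ
  have hC0 : 0 ≤ C := let ⟨_, ht⟩ := hC.exists; ENNReal.toReal_nonneg.trans ht
  have hllr_le : ∀ᵐ t ∂ν, llr η ν t ≤ C :=
    hC.mono fun t ht => (Real.log_le_self ENNReal.toReal_nonneg).trans ht
  have hgood : ∀ᵐ t ∂η, η.rnDeriv ν t ≠ 0 ∧ llr η ν t ≤ C :=
    ((Measure.rnDeriv_pos hν).and (hν.ae_le hllr_le)).mono fun t ht => ⟨ht.1.ne', ht.2⟩
  have hpointwise : ∀ᵐ x ∂μ, klDiv (κ x) η + ENNReal.ofReal C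
      ≤ klDiv (κ x) ν + ∫⁻ t, ENNReal.ofReal (C - llr η ν t) ∂κ x :=
    (Measure.ae_ae_of_ae_comp hgood).mono fun x hx => klDiv_add_le_klDiv_add_lintegral hC0 hx
  have hgap_meas : Measurable fun t => ENNReal.ofReal (C - llr η ν t) := by fun_prop
  refine (ENNReal.add_le_add_iff_right (ENNReal.ofReal_ne_top (r := C))).1 ?_
  calc ∫⁻ x, klDiv (κ x) η ∂μ + ENNReal.ofReal C
      = ∫⁻ x, (klDiv (κ x) η + ENNReal.ofReal C) ∂μ := by
        rw [lintegral_add_right _ measurable_const, lintegral_const, measure_univ, mul_one]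
    _ ≤ ∫⁻ x, (klDiv (κ x) ν + ∫⁻ t, ENNReal.ofReal (C - llr η ν t) ∂κ x) ∂μ :=
        lintegral_mono_ae hpointwise
    _ = ∫⁻ x, klDiv (κ x) ν ∂μ + ∫⁻ t, ENNReal.ofReal (C - llr η ν t) ∂η := by
        rw [lintegral_add_right _ hgap_meas.lintegral_kernel,
          Measure.lintegral_bind κ.aemeasurable hgap_meas.aemeasurable]
    _ ≤ ∫⁻ x, klDiv (κ x) ν ∂μ + ENNReal.ofReal C := by
        gcongr
        exact lintegral_ofReal_sub_llr_le hν (integrable_llr_of_toReal_rnDeriv_le hν hC)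
          (hν.ae_le hllr_le)

/-- If `μ ≥ c·μ'` then the mutual information `I(X;Π(X)) = ∫ KL(κ(x) ‖ μ⋆κ) dμ(x)` for
`X ∼ μ` is at least `c` times the mutual information for `X' ∼ μ'`. -/
theorem mutualInfo_ge_of_measure_ge
    {X T : Type*} [MeasurableSpace X] [MeasurableSpace T]
    (c : ℝ) (hc : 0 < c) (μ μ' : Measure X)
    [IsProbabilityMeasure μ] [IsProbabilityMeasure μ']
    (hle : ∀ A : Set X, MeasurableSet A → ENNReal.ofReal c * μ' A ≤ μ A)
    (κ : Kernel X T) [IsMarkovKernel κ] :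
    ENNReal.ofReal c * ∫⁻ x, klDiv (κ x) (μ'.bind (fun y => κ y)) ∂μ'
      ≤ ∫⁻ x, klDiv (κ x) (μ.bind (fun y => κ y)) ∂μ := by
  have hμ : ENNReal.ofReal c • μ' ≤ μ := Measure.le_iff.2 fun s hs => by simpa using hle s hs
  have hcomp : ENNReal.ofReal c • (κ ∘ₘ μ') ≤ κ ∘ₘ μ := by
    rw [← Measure.comp_smul]
    exact comp_mono_right hμ κ
  have hac : κ ∘ₘ μ' ≪ κ ∘ₘ μ :=
    (Measure.absolutelyContinuous_smul (ENNReal.ofReal_pos.2 hc).ne').trans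
      (Measure.absolutelyContinuous_of_le hcomp)
  calc ENNReal.ofReal c * ∫⁻ x, klDiv (κ x) (κ ∘ₘ μ') ∂μ'
      ≤ ENNReal.ofReal c * ∫⁻ x, klDiv (κ x) (κ ∘ₘ μ) ∂μ' := by
        gcongr ENNReal.ofReal c * ?_
        exact lintegral_klDiv_comp_le μ' κ hac (toReal_rnDeriv_le_of_smul_le hc hcomp)
    _ = ∫⁻ x, klDiv (κ x) (κ ∘ₘ μ) ∂(ENNReal.ofReal c • μ') := by
        rw [lintegral_smul_measure, smul_eq_mul]
    _ ≤ ∫⁻ x, klDiv (κ x) (κ ∘ₘ μ) ∂μ := lintegral_mono' hμ le_rfl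
end
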